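/- With S = {0, 1, 3} ⊆ ℤ, the Cayley poset P(ℤ, S) is a Cayley representation of ℤ: every order automorphism of P(ℤ, S) is translation by an integer. -/

import Mathlib

variable {G : Type*}

/-- The order relation of the (additive) Cayley poset `P(G,S)`: the underlying set is
the disjoint union of two copies of `G` (`Sum.inl g` written `g`, `Sum.inr h` written
`h'`), with `g < h'` iff `h - g ∈ S`, and no other distinct elements comparable. -/
def addCayleyLE [AddGroup G] (S : Set G) : G ⊕ G → G ⊕ G → Prop
  | Sum.inl g, Sum.inl h => g = h
  | Sum.inl g, Sum.inr h => h - g ∈ S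
  | Sum.inr _, Sum.inl _ => False
  | Sum.inr g, Sum.inr h => g = h

/-- The additive Cayley poset `P(G,S)` as a type synonym for `G ⊕ G`. -/
def AddCayleyPoset (G : Type*) [AddGroup G] (S : Set G) : Type _ := G ⊕ G

instance [AddGroup G] (S : Set G) : PartialOrder (AddCayleyPoset G S) where
  le x y := addCayleyLE S x y
  le_refl x := by cases x <;> exact rfl
  le_trans x y z hxy hyz := by
    cases x <;> cases y <;> cases z <;> simp_all [addCayleyLE]
  le_antisymm x y hxy hyx := by
    cases x <;> cases y <;> simp_all [addCayleyLE] <;> (subst hxy; rfl)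

/-- The translation `L(g)` on `P(G,S)`: `h ↦ g + h` on minimal points and
`h' ↦ (g + h)'` on maximal points. -/
def addCayleyL [AddGroup G] (g : G) : G ⊕ G → G ⊕ G
  | Sum.inl h => Sum.inl (g + h)
  | Sum.inr h => Sum.inr (g + h)

/-- `P(G,S)` is a Cayley representation of the additive group `G` if every order
automorphism of the Cayley poset `P(G,S)` is a translation. -/
def IsAddCayleyRep (G : Type*) [AddGroup G] (S : Set G) : Prop :=
  ∀ φ : AddCayleyPoset G S ≃o AddCayleyPoset G S,
    ∃ g : G, ∀ p : AddCayleyPoset G S, φ p = addCayleyL g p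

/-!
An order automorphism fixes the sets of minimal and of maximal points, so it is given by injections
`a`, `b : ℤ → ℤ` with `h - g ∈ S → b h - a g ∈ S` for `S = {0, 1, 3}`. Since `S - S = [-3, 3]`, two
minimal points lie below a common maximal one iff they are at distance at most 3, so `a` preserves
distance `≤ 3`. The points `x - 2, x - 1, x + 2, x + 3` are four distinct integers within distance 3
of both `x` and `x + 1`, whereas two integers at distance 2 or 3 have at most three such common
neighbours; hence `a (x + 1) = a x ± 1`. Finally `a` maps the points `x - 2, x, x + 1` below the
maximal point `(x + 1)'` into `b (x + 1) - {3, 1, 0}`, and moving from `a (x - 2)` to `a x` in unit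
steps shows that `a (x + 1) = a x + 1 = b (x + 1)` rather than the reflected assignment.
-/

namespace AddCayleyPoset

variable {G : Type*} [AddGroup G] {S : Set G}

def bot (g : G) : AddCayleyPoset G S := Sum.inl g

def top (h : G) : AddCayleyPoset G S := Sum.inr h

theorem bot_le_top {g h : G} : (bot g : AddCayleyPoset G S) ≤ top h ↔ h - g ∈ S := Iff.rfl

theorem isMax_top (h : G) : IsMax (top h : AddCayleyPoset G S) := by
  rintro (k | k) hle
  · exact hle.elim
  · exact (hle : h = k).symm

theorem not_isMax_bot (hS : S.Nonempty) (g : G) : ¬IsMax (bot g : AddCayleyPoset G S) := by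
  obtain ⟨s, hs⟩ := hS
  intro hmax
  exact hmax (bot_le_top.2 (by simpa using hs) : bot g ≤ top (s + g))

theorem exists_apply_bot (φ : AddCayleyPoset G S ≃o AddCayleyPoset G S) (hS : S.Nonempty)
    (g : G) : ∃ k, φ (bot g) = bot k := by
  rcases hφ : φ (bot g) with k | k
  · exact ⟨k, rfl⟩
  · exact absurd (φ.isMax_apply.1 (by rw [hφ]; exact isMax_top k)) (not_isMax_bot hS g)

theorem exists_apply_top (φ : AddCayleyPoset G S ≃o AddCayleyPoset G S) (hS : S.Nonempty)
    (h : G) : ∃ k, φ (top h) = top k := by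
  rcases hφ : φ (top h) with k | k
  · obtain ⟨k', hk'⟩ := exists_apply_bot φ.symm hS k
    exact (Sum.inl_ne_inr (hk'.symm.trans (φ.symm_apply_eq.2 hφ.symm))).elim
  · exact ⟨k, rfl⟩

theorem exists_apply_bot_apply_top (φ : AddCayleyPoset G S ≃o AddCayleyPoset G S)
    (hS : S.Nonempty) :
    ∃ a b : G → G, Function.Injective a ∧ (∀ g h, h - g ∈ S → b h - a g ∈ S) ∧
      (∀ g, φ (bot g) = bot (a g)) ∧ ∀ h, φ (top h) = top (b h) := by
  choose a ha using exists_apply_bot φ hS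
  choose b hb using exists_apply_top φ hS
  refine ⟨a, b, fun x y hxy => ?_, fun g h hgh => ?_, ha, hb⟩
  · exact Sum.inl_injective (φ.injective ((ha x).trans ((congrArg bot hxy).trans (ha y).symm)))
  · simpa only [ha, hb, bot_le_top] using φ.monotone (bot_le_top.2 hgh)

end AddCayleyPoset

namespace ZeroOneThree

local notation "S₀" => ({0, 1, 3} : Set ℤ)

variable {a b : ℤ → ℤ}

theorem mem_zero_one_three {n : ℤ} : n ∈ S₀ ↔ n = 0 ∨ n = 1 ∨ n = 3 := by simp

theorem exists_common_top_iff_abs_sub_le {x z : ℤ} :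
    (∃ t, t - x ∈ S₀ ∧ t - z ∈ S₀) ↔ |x - z| ≤ 3 := by
  simp only [mem_zero_one_three, abs_le]
  constructor
  · rintro ⟨t, hx, hz⟩
    omega
  · intro h
    rcases (by omega : z = x - 3 ∨ z = x - 2 ∨ z = x - 1 ∨ z = x ∨ z = x + 1 ∨ z = x + 2 ∨
      z = x + 3) with h | h | h | h | h | h | h
    exacts [⟨x, by omega⟩, ⟨x + 1, by omega⟩, ⟨x, by omega⟩, ⟨x, by omega⟩, ⟨x + 1, by omega⟩,
      ⟨x + 3, by omega⟩, ⟨x + 3, by omega⟩]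

theorem abs_apply_sub_apply_le_three (hab : ∀ g h, h - g ∈ S₀ → b h - a g ∈ S₀) {x z : ℤ}
    (hxz : |x - z| ≤ 3) : |a x - a z| ≤ 3 := by
  obtain ⟨t, hx, hz⟩ := exists_common_top_iff_abs_sub_le.2 hxz
  exact exists_common_top_iff_abs_sub_le.1 ⟨b t, hab _ _ hx, hab _ _ hz⟩

theorem eq_add_one_or_eq_sub_one_of_four_common_near {u v w₁ w₂ w₃ w₄ : ℤ}
    (hnd : [w₁, w₂, w₃, w₄, u, v].Nodup) (huv : |u - v| ≤ 3)
    (hw : ∀ w ∈ [w₁, w₂, w₃, w₄], |w - u| ≤ 3 ∧ |w - v| ≤ 3) : u = v + 1 ∨ u = v - 1 := by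
  simp only [List.forall_mem_cons] at hw
  simp only [List.nodup_cons, List.mem_cons, List.not_mem_nil, abs_le] at hnd hw huv
  omega

theorem apply_add_one_eq_or (ha : Function.Injective a)
    (hab : ∀ g h, h - g ∈ S₀ → b h - a g ∈ S₀) (x : ℤ) :
    a (x + 1) = a x + 1 ∨ a (x + 1) = a x - 1 := by
  have hnd : [x - 2, x - 1, x + 2, x + 3, x + 1, x].Nodup := by
    simp only [List.nodup_cons, List.mem_cons, List.not_mem_nil, List.nodup_nil, or_false,
      not_false_eq_true, and_true]
    omega
  refine eq_add_one_or_eq_sub_one_of_four_common_near (hnd.map ha)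
    (abs_apply_sub_apply_le_three hab ?_) ?_
  · rw [abs_le]; omega
  · intro w hw
    simp only [List.mem_cons, List.not_mem_nil, or_false] at hw
    rcases hw with rfl | rfl | rfl | rfl <;>
      exact ⟨abs_apply_sub_apply_le_three hab (by rw [abs_le]; omega),
        abs_apply_sub_apply_le_three hab (by rw [abs_le]; omega)⟩

theorem apply_add_one_eq (ha : Function.Injective a) (hab : ∀ g h, h - g ∈ S₀ → b h - a g ∈ S₀)
    (x : ℤ) : b (x + 1) = a (x + 1) ∧ a (x + 1) = a x + 1 := by
  have h₀ := hab (x + 1) (x + 1) (by rw [mem_zero_one_three]; omega)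
  have h₁ := hab x (x + 1) (by rw [mem_zero_one_three]; omega)
  have h₃ := hab (x - 2) (x + 1) (by rw [mem_zero_one_three]; omega)
  have s₀ := apply_add_one_eq_or ha hab x
  have s₁ := apply_add_one_eq_or ha hab (x - 1)
  have s₂ := apply_add_one_eq_or ha hab (x - 2)
  have n₁ := ha.ne (show x - 2 ≠ x + 1 by omega)
  have n₂ := ha.ne (show x - 2 ≠ x by omega)
  rw [sub_add_cancel] at s₁
  rw [show x - 2 + 1 = x - 1 by ring] at s₂
  rw [mem_zero_one_three] at h₀ h₁ h₃
  omega

theorem apply_eq_apply_zero_add (ha : Function.Injective a)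
    (hab : ∀ g h, h - g ∈ S₀ → b h - a g ∈ S₀) (x : ℤ) : a x = a 0 + x ∧ b x = a 0 + x := by
  have hlin : ∀ y, a y = a 0 + y := by
    intro y
    induction y using Int.induction_on with
    | zero => simp
    | succ n ih => rw [(apply_add_one_eq ha hab n).2, ih]; ring
    | pred n ih =>
      have := (apply_add_one_eq ha hab (-n - 1)).2
      rw [sub_add_cancel] at this
      omega
  refine ⟨hlin x, ?_⟩
  have := (apply_add_one_eq ha hab (x - 1)).1
  rw [sub_add_cancel] at this
  rw [this, hlin]

end ZeroOneThree

/-- With `S = {0, 1, 3} ⊆ ℤ`, the Cayley poset `P(ℤ, S)` is a Cayley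
representation of `ℤ`. -/
theorem int_cayleyRep : IsAddCayleyRep ℤ ({0, 1, 3} : Set ℤ) := by
  intro φ
  obtain ⟨a, b, ha, hab, hφa, hφb⟩ := AddCayleyPoset.exists_apply_bot_apply_top φ ⟨0, by simp⟩
  have htrans := ZeroOneThree.apply_eq_apply_zero_add ha hab
  refine ⟨a 0, ?_⟩
  rintro (g | h)
  · exact (hφa g).trans (congrArg AddCayleyPoset.bot (htrans g).1)
  · exact (hφb h).trans (congrArg AddCayleyPoset.top (htrans h).2)
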